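/- For the rolling coin on a table moving with velocity field (α(x,y), β(x,y)), the drift f = (cos θ (α cos θ + β sin θ), sin θ (α cos θ + β sin θ), 0, 0)ᵀ and characteristic field c = g₂ = (R cos θ, R sin θ, 0, 1)ᵀ satisfy: [f, c] is colinear with g₃ = (−R sin θ, R cos θ, 0, 0)ᵀ for all θ if and only if ∂α/∂x = 0, ∂β/∂y = 0 and ∂α/∂y = −∂β/∂x; equivalently iff α = c·y + d, β = −c·x + e for constants c, d, e ∈ ℝ. -/

import Mathlib

/-- Lie bracket of vector fields on `ℝ⁴`: `[X, Y] = DY·X − DX·Y`. -/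
noncomputable def bracket (X Y : (Fin 4 → ℝ) → (Fin 4 → ℝ)) : (Fin 4 → ℝ) → (Fin 4 → ℝ) :=
  fun x => fderiv ℝ Y x (X x) - fderiv ℝ X x (Y x)

/-- The drift of the coin on a moving table:
`f = (cos θ (α cos θ + β sin θ), sin θ (α cos θ + β sin θ), 0, 0)ᵀ`. -/
noncomputable def coinDrift (α β : ℝ × ℝ → ℝ) : (Fin 4 → ℝ) → (Fin 4 → ℝ) :=
  fun x => ![Real.cos (x 2) * (α (x 0, x 1) * Real.cos (x 2) + β (x 0, x 1) * Real.sin (x 2)),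
             Real.sin (x 2) * (α (x 0, x 1) * Real.cos (x 2) + β (x 0, x 1) * Real.sin (x 2)),
             0, 0]

/-- The characteristic field `c = g₂ = (R cos θ, R sin θ, 0, 1)ᵀ`. -/
noncomputable def gc2 (R : ℝ) : (Fin 4 → ℝ) → (Fin 4 → ℝ) :=
  fun x => ![R * Real.cos (x 2), R * Real.sin (x 2), 0, 1]

/-- `g₃ = (−R sin θ, R cos θ, 0, 0)ᵀ`. -/
noncomputable def gc3 (R : ℝ) : (Fin 4 → ℝ) → (Fin 4 → ℝ) :=
  fun x => ![-(R * Real.sin (x 2)), R * Real.cos (x 2), 0, 0]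

open Real ContinuousLinearMap

noncomputable def Gam (R : ℝ) (α β : ℝ × ℝ → ℝ) (x : Fin 4 → ℝ) : ℝ :=
  Real.cos (x 2) * fderiv ℝ α (x 0, x 1) (R * Real.cos (x 2), R * Real.sin (x 2)) +
  Real.sin (x 2) * fderiv ℝ β (x 0, x 1) (R * Real.cos (x 2), R * Real.sin (x 2))

lemma bracket_eq (R : ℝ) (α β : ℝ × ℝ → ℝ) (hα : ContDiff ℝ (⊤ : ℕ∞) α) (hβ : ContDiff ℝ (⊤ : ℕ∞) β)
    (x : Fin 4 → ℝ) :
    bracket (coinDrift α β) (gc2 R) x =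
      ![-(Real.cos (x 2) * Gam R α β x), -(Real.sin (x 2) * Gam R α β x), 0, 0] := by
  set θ := x 2 with hθ
  set p : ℝ × ℝ := (x 0, x 1) with hp
  set A := fderiv ℝ α p with hA
  set B := fderiv ℝ β p with hB
  set P : (Fin 4 → ℝ) →L[ℝ] ℝ × ℝ := (proj 0).prod (proj 1) with hP
  have hproj2 : HasFDerivAt (fun x : Fin 4 → ℝ => x 2) (proj (2 : Fin 4) : (Fin 4 → ℝ) →L[ℝ] ℝ) x :=
    (ContinuousLinearMap.proj (2 : Fin 4) : (Fin 4 → ℝ) →L[ℝ] ℝ).hasFDerivAt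
  have hPd : HasFDerivAt (fun x : Fin 4 → ℝ => ((x 0 : ℝ), (x 1 : ℝ))) P x := P.hasFDerivAt
  have hAd : HasFDerivAt (fun x : Fin 4 → ℝ => α (x 0, x 1)) (A.comp P) x :=
    ((hα.differentiable (by simp) (x 0, x 1)).hasFDerivAt).comp x hPd
  have hBd : HasFDerivAt (fun x : Fin 4 → ℝ => β (x 0, x 1)) (B.comp P) x :=
    ((hβ.differentiable (by simp) (x 0, x 1)).hasFDerivAt).comp x hPd
  have hcos : HasFDerivAt (fun x : Fin 4 → ℝ => Real.cos (x 2))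
      ((-Real.sin θ) • (proj 2 : (Fin 4 → ℝ) →L[ℝ] ℝ)) x :=
    by have := (Real.hasDerivAt_cos θ).comp_hasFDerivAt x hproj2; exact this
  have hsin : HasFDerivAt (fun x : Fin 4 → ℝ => Real.sin (x 2))
      ((Real.cos θ) • (proj 2 : (Fin 4 → ℝ) →L[ℝ] ℝ)) x :=
    by have := (Real.hasDerivAt_sin θ).comp_hasFDerivAt x hproj2; exact this
  set Cx := (-Real.sin θ) • (proj 2 : (Fin 4 → ℝ) →L[ℝ] ℝ) with hCx
  set Sx := (Real.cos θ) • (proj 2 : (Fin 4 → ℝ) →L[ℝ] ℝ) with hSx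
  set Dγ := (α p • Cx + Real.cos θ • A.comp P) + (β p • Sx + Real.sin θ • B.comp P) with hDγ
  have hγ : HasFDerivAt
      (fun x : Fin 4 → ℝ => α (x 0, x 1) * Real.cos (x 2) + β (x 0, x 1) * Real.sin (x 2))
      Dγ x := (hAd.mul hcos).add (hBd.mul hsin)
  set γv := α p * Real.cos θ + β p * Real.sin θ with hγv
  set D0 := Real.cos θ • Dγ + γv • Cx with hD0
  set D1 := Real.sin θ • Dγ + γv • Sx with hD1
  have h0 : HasFDerivAt
      (fun x : Fin 4 → ℝ =>
        Real.cos (x 2) * (α (x 0, x 1) * Real.cos (x 2) + β (x 0, x 1) * Real.sin (x 2)))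
      D0 x := hcos.mul hγ
  have h1 : HasFDerivAt
      (fun x : Fin 4 → ℝ =>
        Real.sin (x 2) * (α (x 0, x 1) * Real.cos (x 2) + β (x 0, x 1) * Real.sin (x 2)))
      D1 x := hsin.mul hγ
  have hf : HasFDerivAt (coinDrift α β) (ContinuousLinearMap.pi ![D0, D1, 0, 0]) x := by
    rw [hasFDerivAt_pi']
    intro i
    fin_cases i <;>
      simp only [coinDrift, Matrix.cons_val_zero, Matrix.cons_val_one, Matrix.head_cons,
        Matrix.cons_val_two, Matrix.tail_cons, Matrix.cons_val_three, proj_pi,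
        Fin.isValue]
    · exact h0
    · exact h1
    · exact hasFDerivAt_const _ _
    · exact hasFDerivAt_const _ _
  have hg : HasFDerivAt (gc2 R)
      (ContinuousLinearMap.pi ![R • Cx, R • Sx, 0, 0]) x := by
    rw [hasFDerivAt_pi']
    intro i
    fin_cases i <;>
      simp only [gc2, Matrix.cons_val_zero, Matrix.cons_val_one, Matrix.head_cons,
        Matrix.cons_val_two, Matrix.tail_cons, Matrix.cons_val_three, proj_pi,
        Fin.isValue]
    · have h := hcos.const_mul R
      convert h using 1
      all_goals rfl
    · have h := hsin.const_mul R
      convert h using 1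
      all_goals rfl
    · exact hasFDerivAt_const _ _
    · exact hasFDerivAt_const _ _
  have e1 : fderiv ℝ (gc2 R) x (coinDrift α β x) = 0 := by
    rw [hg.fderiv]
    funext i
    fin_cases i <;>
      simp [coinDrift, hCx, hSx, Pi.zero_apply]
  have e2 : fderiv ℝ (coinDrift α β) x (gc2 R x) =
      ![Real.cos θ * Gam R α β x, Real.sin θ * Gam R α β x, 0, 0] := by
    rw [hf.fderiv]
    funext i
    fin_cases i <;>
      simp [gc2, hD0, hD1, hDγ, hCx, hSx, Gam, ← hθ, ← hp, ← hA, ← hB, hP,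
        mul_comm, mul_left_comm] <;> ring
  rw [bracket, e1, e2]
  funext i
  fin_cases i <;> simp

lemma clm2 (L : ℝ × ℝ →L[ℝ] ℝ) (a b : ℝ) : L (a, b) = a * L (1, 0) + b * L (0, 1) := by
  have h : ((a, b) : ℝ × ℝ) = a • ((1:ℝ), (0:ℝ)) + b • ((0:ℝ), (1:ℝ)) := by
    simp [Prod.ext_iff]
  rw [h, map_add, map_smul, map_smul, smul_eq_mul, smul_eq_mul]

lemma pde_to_affine (α β : ℝ × ℝ → ℝ) (hα : ContDiff ℝ (⊤ : ℕ∞) α) (hβ : ContDiff ℝ (⊤ : ℕ∞) β)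
    (h : ∀ p : ℝ × ℝ, fderiv ℝ α p (1, 0) = 0 ∧ fderiv ℝ β p (0, 1) = 0 ∧
      fderiv ℝ α p (0, 1) = -fderiv ℝ β p (1, 0)) :
    ∃ c d e : ℝ, (∀ p : ℝ × ℝ, α p = c * p.2 + d) ∧ (∀ p : ℝ × ℝ, β p = -c * p.1 + e) := by
  have hαH : ∀ y t : ℝ, HasDerivAt (fun t => α (t, y)) (fderiv ℝ α (t, y) (1, 0)) t :=
    fun y t => (hα.differentiable (by simp) (t, y)).hasFDerivAt.comp_hasDerivAt t
      ((hasDerivAt_id t).prodMk (hasDerivAt_const t y))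
  have hαV : ∀ x t : ℝ, HasDerivAt (fun t => α (x, t)) (fderiv ℝ α (x, t) (0, 1)) t :=
    fun x t => (hα.differentiable (by simp) (x, t)).hasFDerivAt.comp_hasDerivAt t
      ((hasDerivAt_const t x).prodMk (hasDerivAt_id t))
  have hβH : ∀ y t : ℝ, HasDerivAt (fun t => β (t, y)) (fderiv ℝ β (t, y) (1, 0)) t :=
    fun y t => (hβ.differentiable (by simp) (t, y)).hasFDerivAt.comp_hasDerivAt t
      ((hasDerivAt_id t).prodMk (hasDerivAt_const t y))
  have hβV : ∀ x t : ℝ, HasDerivAt (fun t => β (x, t)) (fderiv ℝ β (x, t) (0, 1)) t :=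
    fun x t => (hβ.differentiable (by simp) (x, t)).hasFDerivAt.comp_hasDerivAt t
      ((hasDerivAt_const t x).prodMk (hasDerivAt_id t))
  -- α is constant on horizontal lines
  have hconstα : ∀ x y : ℝ, α (x, y) = α (0, y) := by
    intro x y
    exact is_const_of_deriv_eq_zero (fun t => (hαH y t).differentiableAt)
      (fun t => by rw [(hαH y t).deriv]; exact (h (t, y)).1) x 0
  -- β is constant on vertical lines
  have hconstβ : ∀ x y : ℝ, β (x, y) = β (x, 0) := by
    intro x y
    exact is_const_of_deriv_eq_zero (fun t => (hβV x t).differentiableAt)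
      (fun t => by rw [(hβV x t).deriv]; exact (h (x, t)).2.1) y 0
  -- ∂α/∂y is independent of x
  have hay : ∀ x y : ℝ, fderiv ℝ α (x, y) (0, 1) = fderiv ℝ α (0, y) (0, 1) := by
    intro x y
    have h1 : HasDerivAt (fun t => α (0, t)) (fderiv ℝ α (x, y) (0, 1)) y := by
      have := hαV x y
      have hfn : (fun t => α (x, t)) = fun t => α (0, t) := funext fun t => hconstα x t
      rwa [hfn] at this
    exact h1.deriv ▸ (hαV 0 y).deriv ▸ rfl
  -- ∂β/∂x is independent of y
  have hbx : ∀ x y : ℝ, fderiv ℝ β (x, y) (1, 0) = fderiv ℝ β (x, 0) (1, 0) := by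
    intro x y
    have h1 : HasDerivAt (fun t => β (t, 0)) (fderiv ℝ β (x, y) (1, 0)) x := by
      have := hβH y x
      have hfn : (fun t => β (t, y)) = fun t => β (t, 0) := funext fun t => hconstβ t y
      rwa [hfn] at this
    exact h1.deriv ▸ (hβH 0 x).deriv ▸ rfl
  set c0 : ℝ := fderiv ℝ α (0, 0) (0, 1) with hc0
  -- ∂α/∂y is globally constant
  have hayc : ∀ p : ℝ × ℝ, fderiv ℝ α p (0, 1) = c0 := by
    rintro ⟨x, y⟩
    calc fderiv ℝ α (x, y) (0, 1) = fderiv ℝ α (0, y) (0, 1) := hay x y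
      _ = -fderiv ℝ β (0, y) (1, 0) := (h (0, y)).2.2
      _ = -fderiv ℝ β (0, 0) (1, 0) := by rw [hbx 0 y]
      _ = fderiv ℝ α (0, 0) (0, 1) := ((h (0, 0)).2.2).symm
  have hbxc : ∀ p : ℝ × ℝ, fderiv ℝ β p (1, 0) = -c0 := by
    intro p
    have := (h p).2.2
    rw [hayc p] at this
    linarith
  refine ⟨c0, α (0, 0), β (0, 0), ?_, ?_⟩
  · rintro ⟨x, y⟩
    have key : ∀ t : ℝ, α (0, t) - c0 * t = α (0, 0) - c0 * 0 := by
      intro u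
      refine is_const_of_deriv_eq_zero (f := fun t => α (0, t) - c0 * t)
        (fun t => ?_) (fun t => ?_) u 0
      · exact ((hαV 0 t).sub ((hasDerivAt_id t).const_mul c0)).differentiableAt
      · have hd := (hαV 0 t).sub ((hasDerivAt_id t).const_mul c0)
        simp only [id_eq] at hd
        rw [show (fun t => α (0, t) - c0 * t) = ((fun t => α (0, t)) - fun y => c0 * y) from rfl,
          hd.deriv, hayc (0, t)]; ring
    have := key y
    have h2 := hconstα x y
    simp only
    nlinarith [this, h2]
  · rintro ⟨x, y⟩
    have key : ∀ t : ℝ, β (t, 0) + c0 * t = β (0, 0) + c0 * 0 := by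
      intro u
      refine is_const_of_deriv_eq_zero (f := fun t => β (t, 0) + c0 * t)
        (fun t => ?_) (fun t => ?_) u 0
      · exact ((hβH 0 t).add ((hasDerivAt_id t).const_mul c0)).differentiableAt
      · have hd := (hβH 0 t).add ((hasDerivAt_id t).const_mul c0)
        simp only [id_eq] at hd
        rw [show (fun t => β (t, 0) + c0 * t) = ((fun t => β (t, 0)) + fun y => c0 * y) from rfl,
          hd.deriv, hbxc (t, 0)]; ring
    have := key x
    have h2 := hconstβ x y
    simp only
    nlinarith [this, h2]

lemma affine_to_pde (α β : ℝ × ℝ → ℝ) (c d e : ℝ)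
    (h1 : ∀ p : ℝ × ℝ, α p = c * p.2 + d) (h2 : ∀ p : ℝ × ℝ, β p = -c * p.1 + e) :
    ∀ p : ℝ × ℝ, fderiv ℝ α p (1, 0) = 0 ∧ fderiv ℝ β p (0, 1) = 0 ∧
      fderiv ℝ α p (0, 1) = -fderiv ℝ β p (1, 0) := by
  intro p
  have hαeq : α = fun p : ℝ × ℝ => c * p.2 + d := funext h1
  have hβeq : β = fun p : ℝ × ℝ => -c * p.1 + e := funext h2
  have hfα : HasFDerivAt (fun p : ℝ × ℝ => c * p.2 + d) (c • ContinuousLinearMap.snd ℝ ℝ ℝ) p := by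
    have := ((ContinuousLinearMap.snd ℝ ℝ ℝ).hasFDerivAt (x := p)).const_mul c
    simpa using this.add_const d
  have hfβ : HasFDerivAt (fun p : ℝ × ℝ => -c * p.1 + e) (-(c • ContinuousLinearMap.fst ℝ ℝ ℝ)) p := by
    have := ((ContinuousLinearMap.fst ℝ ℝ ℝ).hasFDerivAt (x := p)).const_mul (-c)
    simpa using this.add_const e
  rw [hαeq, hβeq, hfα.fderiv, hfβ.fderiv]
  simp


lemma colinear_iff_gam (R : ℝ) (α β : ℝ × ℝ → ℝ) (hα : ContDiff ℝ (⊤ : ℕ∞) α) (hβ : ContDiff ℝ (⊤ : ℕ∞) β) :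
    (∀ x : Fin 4 → ℝ, ∃ lam : ℝ, bracket (coinDrift α β) (gc2 R) x = lam • gc3 R x) ↔
      ∀ x : Fin 4 → ℝ, Gam R α β x = 0 := by
  constructor
  · intro h x
    obtain ⟨lam, hl⟩ := h x
    rw [bracket_eq R α β hα hβ x] at hl
    have e0 := congrFun hl 0
    have e1 := congrFun hl 1
    simp only [gc3, Pi.smul_apply, Matrix.cons_val_zero, Matrix.cons_val_one,
      Matrix.head_cons, smul_eq_mul] at e0 e1
    have key : Gam R α β x * (Real.sin (x 2) ^ 2 + Real.cos (x 2) ^ 2) = 0 := by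
      linear_combination (-(Real.cos (x 2))) * e0 + (-(Real.sin (x 2))) * e1
    rw [Real.sin_sq_add_cos_sq] at key
    linarith
  · intro h x
    refine ⟨0, ?_⟩
    rw [bracket_eq R α β hα hβ x]
    funext i
    fin_cases i <;> simp [gc3, h x]

lemma gam_iff_pde (R : ℝ) (hR : R ≠ 0) (α β : ℝ × ℝ → ℝ) :
    (∀ x : Fin 4 → ℝ, Gam R α β x = 0) ↔
      ∀ p : ℝ × ℝ, fderiv ℝ α p (1, 0) = 0 ∧ fderiv ℝ β p (0, 1) = 0 ∧
        fderiv ℝ α p (0, 1) = -fderiv ℝ β p (1, 0) := by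
  constructor
  · intro h p
    have h0 := h ![p.1, p.2, 0, 0]
    have h1 := h ![p.1, p.2, Real.pi / 2, 0]
    have h2 := h ![p.1, p.2, Real.pi / 4, 0]
    simp only [Gam, Matrix.cons_val_zero, Matrix.cons_val_one, Matrix.head_cons,
      Matrix.cons_val_two, Matrix.tail_cons, Real.cos_zero, Real.sin_zero,
      Real.cos_pi_div_two, Real.sin_pi_div_two, Real.cos_pi_div_four, Real.sin_pi_div_four,
      Prod.mk.eta] at h0 h1 h2
    rw [clm2 (fderiv ℝ α p), clm2 (fderiv ℝ β p)] at h0 h1 h2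
    have hAx : fderiv ℝ α p (1, 0) = 0 := by
      have : R * fderiv ℝ α p (1, 0) = 0 := by linear_combination h0
      exact (mul_eq_zero.mp this).resolve_left hR
    have hBy : fderiv ℝ β p (0, 1) = 0 := by
      have : R * fderiv ℝ β p (0, 1) = 0 := by linear_combination h1
      exact (mul_eq_zero.mp this).resolve_left hR
    have hss : Real.sqrt 2 / 2 * (Real.sqrt 2 / 2) = 1 / 2 := by
      rw [div_mul_div_comm, Real.mul_self_sqrt (by norm_num : (2:ℝ) ≥ 0)]
      norm_num
    have hsum : R * (fderiv ℝ α p (0, 1) + fderiv ℝ β p (1, 0)) = 0 := by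
      linear_combination 2 * h2 -
        2 * R * (fderiv ℝ α p (1, 0) + fderiv ℝ α p (0, 1) +
          fderiv ℝ β p (1, 0) + fderiv ℝ β p (0, 1)) * hss -
        R * hAx - R * hBy
    have := (mul_eq_zero.mp hsum).resolve_left hR
    refine ⟨hAx, hBy, by linarith⟩
  · intro h x
    rw [Gam, clm2 (fderiv ℝ α (x 0, x 1)), clm2 (fderiv ℝ β (x 0, x 1)),
      (h (x 0, x 1)).1, (h (x 0, x 1)).2.1, (h (x 0, x 1)).2.2]
    ring

/-- For the rolling coin on a moving table, `[f, c]` is colinear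
with `g₃` everywhere if and only if `∂α/∂x = 0`, `∂β/∂y = 0` and `∂α/∂y = −∂β/∂x`;
equivalently, iff `α = c·y + d`, `β = −c·x + e` for constants `c, d, e ∈ ℝ`. -/
theorem coin_compatibility_characterization (R : ℝ) (hR : R ≠ 0)
    (α β : ℝ × ℝ → ℝ) (hα : ContDiff ℝ (⊤ : ℕ∞) α) (hβ : ContDiff ℝ (⊤ : ℕ∞) β) :
    ((∀ x : Fin 4 → ℝ, ∃ lam : ℝ,
        bracket (coinDrift α β) (gc2 R) x = lam • gc3 R x) ↔
      (∀ p : ℝ × ℝ,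
        fderiv ℝ α p (1, 0) = 0 ∧
        fderiv ℝ β p (0, 1) = 0 ∧
        fderiv ℝ α p (0, 1) = -fderiv ℝ β p (1, 0))) ∧
    ((∀ x : Fin 4 → ℝ, ∃ lam : ℝ,
        bracket (coinDrift α β) (gc2 R) x = lam • gc3 R x) ↔
      (∃ c d e : ℝ, (∀ p : ℝ × ℝ, α p = c * p.2 + d) ∧
        (∀ p : ℝ × ℝ, β p = -c * p.1 + e))) := by
  have hiff1 : (∀ x : Fin 4 → ℝ, ∃ lam : ℝ,
      bracket (coinDrift α β) (gc2 R) x = lam • gc3 R x) ↔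
      (∀ p : ℝ × ℝ, fderiv ℝ α p (1, 0) = 0 ∧ fderiv ℝ β p (0, 1) = 0 ∧
        fderiv ℝ α p (0, 1) = -fderiv ℝ β p (1, 0)) :=
    (colinear_iff_gam R α β hα hβ).trans (gam_iff_pde R hR α β)
  have hiff2 : (∀ p : ℝ × ℝ, fderiv ℝ α p (1, 0) = 0 ∧ fderiv ℝ β p (0, 1) = 0 ∧
        fderiv ℝ α p (0, 1) = -fderiv ℝ β p (1, 0)) ↔
      (∃ c d e : ℝ, (∀ p : ℝ × ℝ, α p = c * p.2 + d) ∧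
        (∀ p : ℝ × ℝ, β p = -c * p.1 + e)) := by
    constructor
    · exact pde_to_affine α β hα hβ
    · rintro ⟨c, d, e, h1, h2⟩
      exact affine_to_pde α β c d e h1 h2
  exact ⟨hiff1, hiff1.trans hiff2⟩
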